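/- arXiv:1204.6545 — 3 statements merged into one kernel-verified Lean document; each statement's English description precedes it below -/
import Mathlib

section
/- The subdifferential of B(f) = Σ_i |f_i − m(f)| is ∂B(f) = P₀ · sign(P₀ f), and consequently ⟨v, 𝟏⟩ = 0 for every v ∈ ∂B(f). -/
open Finset Filter Topology

noncomputable def meanV {n : ℕ} (f : Fin n → ℝ) : ℝ := (∑ i, f i) / n
noncomputable def TVfun {n : ℕ} (w : Fin n → Fin n → ℝ) (f : Fin n → ℝ) : ℝ :=
  (1/2) * ∑ i, ∑ j, w i j * |f i - f j|
noncomputable def Bfun {n : ℕ} (f : Fin n → ℝ) : ℝ := ∑ i, |f i - meanV f|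
noncomputable def Efun {n : ℕ} (w : Fin n → Fin n → ℝ) (f : Fin n → ℝ) : ℝ :=
  TVfun w f / Bfun f
noncomputable def norm2 {n : ℕ} (f : Fin n → ℝ) : ℝ := Real.sqrt (∑ i, (f i)^2)
noncomputable def dotV {n : ℕ} (u v : Fin n → ℝ) : ℝ := ∑ i, u i * v i
def IsSubgradient {n : ℕ} (F : (Fin n → ℝ) → ℝ) (f v : Fin n → ℝ) : Prop :=
  ∀ y, F f + dotV v (y - f) ≤ F y
def GraphConnected {n : ℕ} (w : Fin n → Fin n → ℝ) : Prop :=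
  ∀ i j : Fin n, Relation.ReflTransGen (fun a b => 0 < w a b) i j
def Nonconstant {n : ℕ} (f : Fin n → ℝ) : Prop := ∃ i j, f i ≠ f j
def signSet (t : ℝ) : Set ℝ := if t > 0 then {1} else if t < 0 then {-1} else Set.Icc (-1) 1
noncomputable def P0 {n : ℕ} (f : Fin n → ℝ) : Fin n → ℝ := fun i => f i - meanV f


/-!
With `g = P0 f` we have `B f = ∑ i, |g i|`. Since `P0` is self-adjoint,
`⟨P0 z, y - f⟩ = ⟨z, P0 y - g⟩`, so `P0 z` is a subgradient as soon as each `z i` is a subgradient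
of `|·|` at `g i`. Conversely, `B` is invariant under adding constants, which forces
`∑ i, v i = 0`; perturbing `f` along `t • (eᵢ - eⱼ)` for small `t > 0` gives
`v i - rightSign (g i) ≤ v j + rightSign (-g j)` for all `i`, `j`, and any constant `c` between
the two sides makes `z = v - c` a selection of `sign ∘ g` with `P0 z = v`.
-/

/-- The right derivative of `|·|` at `a`. -/
noncomputable def rightSign (a : ℝ) : ℝ := if 0 ≤ a then 1 else -1

lemma signSet_eq_Icc (a : ℝ) : signSet a = Set.Icc (-rightSign (-a)) (rightSign a) := by
  rcases lt_trichotomy a 0 with ha | rfl | ha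
  · simp [signSet, rightSign, ha, ha.not_gt, ha.not_ge, ha.le]
  · simp [signSet, rightSign]
  · simp [signSet, rightSign, ha, ha.le, ha.not_ge]

lemma eventually_abs_add_eq (a : ℝ) : ∀ᶠ t in 𝓝[>] 0, |a + t| = |a| + t * rightSign a := by
  rcases lt_or_ge a 0 with ha | ha
  · filter_upwards [Ioo_mem_nhdsGT (neg_pos.2 ha)] with t ht
    rw [abs_of_neg ha, abs_of_neg (by linarith [ht.2]), rightSign, if_neg ha.not_ge]
    ring
  · filter_upwards [self_mem_nhdsWithin] with t (ht : 0 < t)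
    rw [abs_of_nonneg ha, abs_of_pos (by linarith), rightSign, if_pos ha]
    ring

lemma abs_add_mul_sub_le_of_mem_signSet {x a : ℝ} (hx : x ∈ signSet a) (b : ℝ) :
    |a| + x * (b - a) ≤ |b| := by
  unfold signSet at hx
  split_ifs at hx with hpos hneg
  · rw [hx, abs_of_pos hpos]; linarith [le_abs_self b]
  · rw [hx, abs_of_neg hneg]; linarith [neg_abs_le b]
  · obtain rfl : a = 0 := by linarith
    have hxb : |x * b| ≤ |b| := by
      rw [abs_mul]
      exact mul_le_of_le_one_left (abs_nonneg b) (abs_le.2 hx)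
    simpa using (le_abs_self _).trans hxb

lemma exists_forall_mem_Icc_of_forall_le {ι : Type*} [Finite ι] {L U : ι → ℝ}
    (h : ∀ i j, L i ≤ U j) : ∃ c, ∀ i, c ∈ Set.Icc (L i) (U i) := by
  cases isEmpty_or_nonempty ι
  · exact ⟨0, isEmptyElim⟩
  · exact ⟨⨆ i, L i, fun i => ⟨le_ciSup (Finite.bddAbove_range L) i, ciSup_le (h · i)⟩⟩

section Centering

variable {n : ℕ}

lemma meanV_add (f g : Fin n → ℝ) : meanV (f + g) = meanV f + meanV g := by
  simp only [meanV, Pi.add_apply, sum_add_distrib, add_div]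

lemma P0_add (f g : Fin n → ℝ) : P0 (f + g) = P0 f + P0 g := by
  ext i
  simp only [P0, meanV_add, Pi.add_apply]
  ring

lemma P0_sub (f g : Fin n → ℝ) : P0 (f - g) = P0 f - P0 g := by
  rw [eq_sub_iff_add_eq, ← P0_add, sub_add_cancel]

lemma P0_const (c : ℝ) : P0 (fun _ : Fin n => c) = 0 := by
  ext i
  have : (n : ℝ) ≠ 0 := by exact_mod_cast i.pos.ne'
  simp [P0, meanV, this]

lemma P0_eq_self_of_sum_eq_zero {w : Fin n → ℝ} (hw : ∑ i, w i = 0) : P0 w = w := by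
  ext i
  simp [P0, meanV, hw]

lemma dotV_P0_comm (a b : Fin n → ℝ) : dotV (P0 a) b = dotV a (P0 b) := by
  simp only [dotV, P0, sub_mul, mul_sub, sum_sub_distrib, ← sum_mul, ← mul_sum, meanV]
  ring

lemma Bfun_eq_sum_abs_P0 (f : Fin n → ℝ) : Bfun f = ∑ i, |P0 f i| := rfl

lemma Bfun_add_of_sum_eq_zero (f : Fin n → ℝ) {w : Fin n → ℝ} (hw : ∑ i, w i = 0) :
    Bfun (f + w) = ∑ i, |P0 f i + w i| := by
  rw [Bfun_eq_sum_abs_P0, P0_add, P0_eq_self_of_sum_eq_zero hw]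
  rfl

lemma Bfun_add_const (f : Fin n → ℝ) (c : ℝ) : Bfun (f + fun _ => c) = Bfun f := by
  rw [Bfun_eq_sum_abs_P0, Bfun_eq_sum_abs_P0, P0_add, P0_const, add_zero]

end Centering

section Subgradient

variable {n : ℕ} {f v : Fin n → ℝ}

lemma isSubgradient_Bfun_P0 {z : Fin n → ℝ} (hz : ∀ i, z i ∈ signSet (P0 f i)) :
    IsSubgradient Bfun f (P0 z) := by
  intro y
  have hdot : dotV (P0 z) (y - f) = ∑ i, z i * (P0 y i - P0 f i) := by
    rw [dotV_P0_comm, P0_sub]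
    rfl
  rw [Bfun_eq_sum_abs_P0, Bfun_eq_sum_abs_P0, hdot, ← sum_add_distrib]
  exact sum_le_sum fun i _ => abs_add_mul_sub_le_of_mem_signSet (hz i) _

lemma IsSubgradient.sum_eq_zero (hv : IsSubgradient Bfun f v) : ∑ i, v i = 0 := by
  have hdot (c : ℝ) : dotV v ((f + fun _ => c) - f) = (∑ i, v i) * c := by
    simp only [dotV, add_sub_cancel_left, sum_mul]
  have h₁ := hv (f + fun _ => 1)
  have h₂ := hv (f + fun _ => -1)
  rw [Bfun_add_const, hdot] at h₁ h₂
  linarith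

lemma IsSubgradient.mul_sub_le (hv : IsSubgradient Bfun f v) {i j : Fin n} (hij : i ≠ j)
    (t : ℝ) :
    t * (v i - v j) ≤ (|P0 f i + t| - |P0 f i|) + (|P0 f j - t| - |P0 f j|) := by
  classical
  set w : Fin n → ℝ := Pi.single i t - Pi.single j t
  have hw_sum : ∑ k, w k = 0 := by simp [w, sum_sub_distrib]
  have hw_dot : dotV v w = t * (v i - v j) := by
    simp only [dotV, w, Pi.sub_apply, mul_sub, sum_sub_distrib, Pi.single_apply, mul_ite,
      mul_zero, sum_ite_eq', mem_univ, if_true]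
    ring
  have hB : Bfun (f + w) - Bfun f =
      (|P0 f i + t| - |P0 f i|) + (|P0 f j - t| - |P0 f j|) := by
    rw [Bfun_add_of_sum_eq_zero f hw_sum, Bfun_eq_sum_abs_P0, ← sum_sub_distrib,
      Fintype.sum_eq_add i j hij fun k hk => by simp [w, hk.1, hk.2]]
    simp [w, hij, hij.symm, sub_eq_add_neg]
  have := hv (f + w)
  rw [add_sub_cancel_left, hw_dot] at this
  linarith

lemma IsSubgradient.sub_rightSign_le (hv : IsSubgradient Bfun f v) (i j : Fin n) :
    v i - rightSign (P0 f i) ≤ v j + rightSign (-P0 f j) := by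
  rcases eq_or_ne i j with rfl | hij
  · unfold rightSign
    split_ifs <;> linarith
  obtain ⟨t, ht, hi, hj⟩ := (eventually_mem_nhdsWithin.and ((eventually_abs_add_eq (P0 f i)).and
    (eventually_abs_add_eq (-P0 f j)))).exists
  have := hv.mul_sub_le hij t
  rw [neg_add_eq_sub, abs_sub_comm, abs_neg] at hj
  rw [hi, hj] at this
  have ht : (0 : ℝ) < t := ht
  nlinarith

lemma IsSubgradient.exists_mem_signSet_eq_P0 (hv : IsSubgradient Bfun f v) :
    ∃ z : Fin n → ℝ, (∀ i, z i ∈ signSet (P0 f i)) ∧ v = P0 z := by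
  obtain ⟨c, hc⟩ := exists_forall_mem_Icc_of_forall_le hv.sub_rightSign_le
  refine ⟨v - fun _ => c, fun i => ?_, ?_⟩
  · rw [signSet_eq_Icc, Pi.sub_apply]
    exact ⟨by linarith [(hc i).2], by linarith [(hc i).1]⟩
  · rw [P0_sub, P0_const, sub_zero, P0_eq_self_of_sum_eq_zero hv.sum_eq_zero]

end Subgradient

theorem stmt5 {n : ℕ} (f : Fin n → ℝ) :
    (∀ v : Fin n → ℝ, IsSubgradient Bfun f v ↔
      ∃ z : Fin n → ℝ, (∀ i, z i ∈ signSet (P0 f i)) ∧ v = P0 z) ∧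
    (∀ v : Fin n → ℝ, IsSubgradient Bfun f v → dotV v (fun _ => 1) = 0) := by
  refine ⟨fun v => ⟨IsSubgradient.exists_mem_signSet_eq_P0, ?_⟩, fun v hv => ?_⟩
  · rintro ⟨z, hz, rfl⟩
    exact isSubgradient_Bfun_P0 hz
  · simpa [dotV] using hv.sum_eq_zero
end

section
/- Let f be nonconstant, v ∈ ∂B(f), g = f + c·v, and h = argmin_u { T(u) + E(f)·‖u − g‖₂²/(2c) }. Then h is nonconstant and the descent inequality E(f) ≥ E(h) + (E(f)/B(h))·‖h − f‖₂²/c holds; in particular E(h) < E(f) unless h = f. -/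
/-! By convexity of `T` and strong convexity of the quadratic term, the proximal point `h`
satisfies the three-point inequality
`T h + E ‖h - g‖² / (2c) + E ‖h - f‖² / (2c) ≤ T f + E ‖f - g‖² / (2c)`, where `E = E(f)`.
Expanding `g = f + c v`, the subgradient inequality `⟪v, h - f⟫ ≤ B h - B f` and `E · B f = T f`
turn it into `T h + E ‖h - f‖² / c ≤ E · B h`. A constant `h` would make both `T h` and `B h`
vanish, forcing `h = f`; so `B h > 0`, and dividing by it gives the descent inequality. -/

open Finset Filter Topology

open Set

section InnerProductSpace

variable {H : Type*} [NormedAddCommGroup H] [InnerProductSpace ℝ H]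

lemma norm_convexComb_sub_sq (x y g : H) (t : ℝ) :
    ‖(1 - t) • x + t • y - g‖ ^ 2
      = (1 - t) * ‖x - g‖ ^ 2 + t * ‖y - g‖ ^ 2 - t * (1 - t) * ‖x - y‖ ^ 2 := by
  have hcomb : (1 - t) • x + t • y - g = (1 - t) • (x - g) + t • (y - g) := by module
  have hdiff : x - y = (x - g) - (y - g) := by abel
  rw [hcomb, hdiff, norm_add_sq_real, norm_sub_sq_real (x - g), norm_smul, norm_smul,
    real_inner_smul_left, real_inner_smul_right, mul_pow, mul_pow, Real.norm_eq_abs,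
    Real.norm_eq_abs, sq_abs, sq_abs]
  ring

-- Compare `h` with the convex combination `(1 - t) • h + t • u` and let `t → 0⁺`.
lemma ConvexOn.add_norm_sub_sq_le_of_forall_le {F : H → ℝ} (hF : ConvexOn ℝ univ F) {r : ℝ}
    {g h : H} (hmin : ∀ u, F h + r * ‖h - g‖ ^ 2 ≤ F u + r * ‖u - g‖ ^ 2) (u : H) :
    F h + r * ‖h - g‖ ^ 2 + r * ‖h - u‖ ^ 2 ≤ F u + r * ‖u - g‖ ^ 2 := by
  have hstep : ∀ t ∈ Ioo (0 : ℝ) 1,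
      F h + r * ‖h - g‖ ^ 2 + (1 - t) * (r * ‖h - u‖ ^ 2) ≤ F u + r * ‖u - g‖ ^ 2 := by
    rintro t ⟨ht0, ht1⟩
    have hmin_t := hmin ((1 - t) • h + t • u)
    have hconv := hF.2 (mem_univ h) (mem_univ u) (sub_nonneg.mpr ht1.le) ht0.le (by ring)
    rw [norm_convexComb_sub_sq] at hmin_t
    rw [smul_eq_mul, smul_eq_mul] at hconv
    refine le_of_mul_le_mul_left ?_ ht0
    linarith
  have hcont : Continuous fun t : ℝ => F h + r * ‖h - g‖ ^ 2 + (1 - t) * (r * ‖h - u‖ ^ 2) := by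
    fun_prop
  have hlim : Tendsto (fun t : ℝ => F h + r * ‖h - g‖ ^ 2 + (1 - t) * (r * ‖h - u‖ ^ 2))
      (𝓝[>] 0) (𝓝 (F h + r * ‖h - g‖ ^ 2 + r * ‖h - u‖ ^ 2)) := by
    apply tendsto_nhdsWithin_of_tendsto_nhds
    convert hcont.tendsto 0 using 2
    ring
  exact le_of_tendsto hlim (eventually_of_mem (Ioo_mem_nhdsGT one_pos) hstep)

lemma ConvexOn.add_norm_sub_sq_div_le_of_isSubgradient {F G : H → ℝ} (hF : ConvexOn ℝ univ F)
    {e c : ℝ} (he : 0 ≤ e) (hc : 0 < c) {f v h : H}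
    (hv : ∀ y, G f + inner ℝ v (y - f) ≤ G y)
    (hh : ∀ u, F h + e * ‖h - (f + c • v)‖ ^ 2 / (2 * c)
      ≤ F u + e * ‖u - (f + c • v)‖ ^ 2 / (2 * c)) :
    F h + e * ‖h - f‖ ^ 2 / c ≤ F f + e * (G h - G f) := by
  have hprox := hF.add_norm_sub_sq_le_of_forall_le (r := e / (2 * c)) (g := f + c • v)
    (fun u => by simpa only [mul_div_right_comm] using hh u) f
  have hhg : ‖h - (f + c • v)‖ ^ 2
      = ‖h - f‖ ^ 2 - 2 * c * inner ℝ v (h - f) + c ^ 2 * ‖v‖ ^ 2 := by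
    rw [show h - (f + c • v) = (h - f) - c • v by abel, norm_sub_sq_real, real_inner_smul_right,
      norm_smul, mul_pow, Real.norm_eq_abs, sq_abs, real_inner_comm]
    ring
  have hfg : ‖f - (f + c • v)‖ ^ 2 = c ^ 2 * ‖v‖ ^ 2 := by
    rw [sub_add_cancel_left, norm_neg, norm_smul, mul_pow, Real.norm_eq_abs, sq_abs]
  have hsub : e * inner ℝ v (h - f) ≤ e * (G h - G f) :=
    mul_le_mul_of_nonneg_left (by linarith [hv h]) he
  rw [hhg, hfg] at hprox
  have hexpand : e / (2 * c) * (‖h - f‖ ^ 2 - 2 * c * inner ℝ v (h - f) + c ^ 2 * ‖v‖ ^ 2)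
        + e / (2 * c) * ‖h - f‖ ^ 2
      = e * ‖h - f‖ ^ 2 / c - e * inner ℝ v (h - f) + e / (2 * c) * (c ^ 2 * ‖v‖ ^ 2) := by
    field_simp [hc.ne']
    ring
  linarith

end InnerProductSpace

lemma ConvexOn.finset_sum {ι E : Type*} [AddCommMonoid E] [Module ℝ E] {s : Set E}
    (hs : Convex ℝ s) (t : Finset ι) {φ : ι → E → ℝ} (hφ : ∀ i ∈ t, ConvexOn ℝ s (φ i)) :
    ConvexOn ℝ s fun x => ∑ i ∈ t, φ i x := by
  classical
  induction t using Finset.induction_on with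
  | empty => simpa using convexOn_const (0 : ℝ) hs
  | insert i t hi ih =>
    simp only [sum_insert hi]
    exact (hφ i (mem_insert_self i t)).add (ih fun j hj => hφ j (mem_insert_of_mem hj))

section GraphFunctionals

variable {n : ℕ}

lemma Bfun_pos {x : Fin n → ℝ} (hx : Nonconstant x) : 0 < Bfun x := by
  obtain ⟨i, j, hij⟩ := hx
  have hne : x i ≠ meanV x ∨ x j ≠ meanV x := by
    by_contra! hmean
    exact hij (hmean.1.trans hmean.2.symm)
  obtain ⟨k, hk⟩ : ∃ k, x k ≠ meanV x := hne.elim (⟨i, ·⟩) (⟨j, ·⟩)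
  exact sum_pos' (fun k _ => abs_nonneg _) ⟨k, mem_univ k, abs_pos.mpr (sub_ne_zero.mpr hk)⟩

lemma meanV_eq_of_not_nonconstant {x : Fin n → ℝ} (hx : ¬Nonconstant x) (i : Fin n) :
    meanV x = x i := by
  simp only [Nonconstant, not_exists, not_not] at hx
  have hn : (n : ℝ) ≠ 0 := Nat.cast_ne_zero.mpr i.pos.ne'
  rw [meanV, sum_congr rfl fun j _ => hx j i, sum_const, card_univ, Fintype.card_fin,
    nsmul_eq_mul, mul_div_cancel_left₀ _ hn]

lemma Bfun_eq_zero_of_not_nonconstant {x : Fin n → ℝ} (hx : ¬Nonconstant x) : Bfun x = 0 :=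
  sum_eq_zero fun i _ => by rw [meanV_eq_of_not_nonconstant hx i, sub_self, abs_zero]

lemma TVfun_eq_zero_of_not_nonconstant (w : Fin n → Fin n → ℝ) {x : Fin n → ℝ}
    (hx : ¬Nonconstant x) : TVfun w x = 0 := by
  simp only [Nonconstant, not_exists, not_not] at hx
  have hterm : ∀ i j, w i j * |x i - x j| = 0 := fun i j => by
    rw [hx i j, sub_self, abs_zero, mul_zero]
  simp [TVfun, hterm]

lemma exists_pos_weight_ne_of_reflTransGen {w : Fin n → Fin n → ℝ} {x : Fin n → ℝ} {i j : Fin n}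
    (hij : Relation.ReflTransGen (fun a b => 0 < w a b) i j) (hne : x i ≠ x j) :
    ∃ a b, 0 < w a b ∧ x a ≠ x b := by
  induction hij using Relation.ReflTransGen.head_induction_on with
  | refl => exact absurd rfl hne
  | @head a b hab _ ih =>
    by_cases hx : x a = x b
    · exact ih (hx ▸ hne)
    · exact ⟨a, b, hab, hx⟩

lemma TVfun_pos {w : Fin n → Fin n → ℝ} (hnn : ∀ i j, 0 ≤ w i j) (hconn : GraphConnected w)
    {x : Fin n → ℝ} (hx : Nonconstant x) : 0 < TVfun w x := by
  obtain ⟨i, j, hij⟩ := hx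
  obtain ⟨a, b, hw, hab⟩ := exists_pos_weight_ne_of_reflTransGen (hconn i j) hij
  have hterm_nonneg : ∀ k l, 0 ≤ w k l * |x k - x l| := fun k l =>
    mul_nonneg (hnn k l) (abs_nonneg _)
  have hterm_pos : 0 < w a b * |x a - x b| := mul_pos hw (abs_pos.mpr (sub_ne_zero.mpr hab))
  exact mul_pos one_half_pos <| sum_pos' (fun k _ => sum_nonneg fun l _ => hterm_nonneg k l)
    ⟨a, mem_univ a, sum_pos' (fun l _ => hterm_nonneg a l) ⟨b, mem_univ b, hterm_pos⟩⟩

lemma convexOn_TVfun {w : Fin n → Fin n → ℝ} (hnn : ∀ i j, 0 ≤ w i j) :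
    ConvexOn ℝ univ (TVfun w) := by
  have hterm : ∀ i j, ConvexOn ℝ univ fun x : Fin n → ℝ => w i j * |x i - x j| := by
    intro i j
    have habs : ConvexOn ℝ univ fun x : Fin n → ℝ => |x i - x j| := by
      have := (convexOn_norm convex_univ).comp_linearMap
        (LinearMap.proj (R := ℝ) (φ := fun _ : Fin n => ℝ) i - LinearMap.proj j)
      simp only [preimage_univ, Function.comp_def, LinearMap.sub_apply, LinearMap.proj_apply,
        Real.norm_eq_abs] at this
      exact this
    exact habs.smul (hnn i j)
  exact (ConvexOn.finset_sum convex_univ univ fun i _ =>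
    ConvexOn.finset_sum convex_univ univ fun j _ => hterm i j).smul one_half_pos.le

end GraphFunctionals

section Euclidean

variable {n : ℕ}

lemma norm2_eq_norm_toLp (x : Fin n → ℝ) : norm2 x = ‖WithLp.toLp 2 x‖ := by
  simp [norm2, EuclideanSpace.norm_eq]

lemma norm2_pos {x : Fin n → ℝ} (hx : x ≠ 0) : 0 < norm2 x := by
  rw [norm2_eq_norm_toLp, norm_pos_iff]
  exact fun h0 => hx (WithLp.toLp_injective 2 (h0.trans (WithLp.toLp_zero 2).symm))

lemma dotV_eq_inner_toLp (u v : Fin n → ℝ) :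
    dotV u v = inner ℝ (WithLp.toLp 2 u) (WithLp.toLp 2 v) := by
  simp [dotV, PiLp.inner_apply, mul_comm]

lemma ConvexOn.add_norm2_sub_sq_div_le_of_isSubgradient {F G : (Fin n → ℝ) → ℝ}
    (hF : ConvexOn ℝ univ F) {e c : ℝ} (he : 0 ≤ e) (hc : 0 < c) {f v h : Fin n → ℝ}
    (hv : IsSubgradient G f v)
    (hh : ∀ u, F h + e * norm2 (h - (f + c • v)) ^ 2 / (2 * c)
      ≤ F u + e * norm2 (u - (f + c • v)) ^ 2 / (2 * c)) :
    F h + e * norm2 (h - f) ^ 2 / c ≤ F f + e * (G h - G f) := by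
  have hF' : ConvexOn ℝ univ fun x : EuclideanSpace ℝ (Fin n) => F x.ofLp :=
    hF.comp_linearMap (WithLp.linearEquiv 2 ℝ (Fin n → ℝ)).toLinearMap
  simpa [norm2_eq_norm_toLp] using
    hF'.add_norm_sub_sq_div_le_of_isSubgradient (G := fun x => G x.ofLp) he hc
      (f := WithLp.toLp 2 f) (v := WithLp.toLp 2 v) (h := WithLp.toLp 2 h)
    (fun y => by simpa [dotV_eq_inner_toLp] using hv y.ofLp)
    (fun u => by simpa [norm2_eq_norm_toLp] using hh u.ofLp)

end Euclidean

theorem stmt7_general {n : ℕ} (w : Fin n → Fin n → ℝ)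
    (hnn : ∀ i j, 0 ≤ w i j)
    (hconn : GraphConnected w) (c : ℝ) (hc : 0 < c)
    (f v g h : Fin n → ℝ) (hf : Nonconstant f)
    (hv : IsSubgradient Bfun f v) (hg : g = f + c • v)
    (hh : ∀ u : Fin n → ℝ,
      TVfun w h + Efun w f * norm2 (h - g)^2 / (2*c)
        ≤ TVfun w u + Efun w f * norm2 (u - g)^2 / (2*c)) :
    Nonconstant h ∧
    Efun w h + (Efun w f / Bfun h) * norm2 (h - f)^2 / c ≤ Efun w f ∧
    (h ≠ f → Efun w h < Efun w f) := by
  subst hg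
  set E := Efun w f
  have hE : 0 < E := div_pos (TVfun_pos hnn hconn hf) (Bfun_pos hf)
  have hEB : E * Bfun f = TVfun w f := div_mul_cancel₀ _ (Bfun_pos hf).ne'
  have hkey : TVfun w h + E * norm2 (h - f) ^ 2 / c ≤ E * Bfun h := by
    linarith [(convexOn_TVfun hnn).add_norm2_sub_sq_div_le_of_isSubgradient hE.le hc hv hh]
  have hnc : Nonconstant h := by
    by_contra hcon
    rw [TVfun_eq_zero_of_not_nonconstant w hcon, Bfun_eq_zero_of_not_nonconstant hcon] at hkey
    obtain rfl : h = f := by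
      by_contra hne
      have := norm2_pos (sub_ne_zero.mpr hne)
      have : 0 < E * norm2 (h - f) ^ 2 / c := by positivity
      linarith
    exact hcon hf
  have hBh := Bfun_pos hnc
  have hdesc : Efun w h + (E / Bfun h) * norm2 (h - f) ^ 2 / c ≤ E := by
    have hquot : Efun w h + (E / Bfun h) * norm2 (h - f) ^ 2 / c
        = (TVfun w h + E * norm2 (h - f) ^ 2 / c) / Bfun h := by
      rw [Efun]; ring
    rwa [hquot, div_le_iff₀ hBh]
  refine ⟨hnc, hdesc, fun hne => ?_⟩
  have := norm2_pos (sub_ne_zero.mpr hne)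
  have : 0 < (E / Bfun h) * norm2 (h - f) ^ 2 / c := by positivity
  linarith

theorem stmt7 {n : ℕ} (w : Fin n → Fin n → ℝ)
    (hsym : ∀ i j, w i j = w j i) (hnn : ∀ i j, 0 ≤ w i j)
    (hconn : GraphConnected w) (c : ℝ) (hc : 0 < c)
    (f v g h : Fin n → ℝ) (hf : Nonconstant f)
    (hv : IsSubgradient Bfun f v) (hg : g = f + c • v)
    (hh : ∀ u : Fin n → ℝ,
      TVfun w h + Efun w f * norm2 (h - g)^2 / (2*c)
        ≤ TVfun w u + Efun w f * norm2 (u - g)^2 / (2*c)) :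
    Nonconstant h ∧
    Efun w h + (Efun w f / Bfun h) * norm2 (h - f)^2 / c ≤ Efun w f ∧
    (h ≠ f → Efun w h < Efun w f) :=
  stmt7_general w hnn hconn c hc f v g h hf hv hg hh
end

section
/- If f* satisfies f* ∈ H^c(f*), then f* is a critical point of E, i.e., there exist w* ∈ ∂T(f*) and v* ∈ ∂B(f*) with w* − E(f*)·v* = 0. -/
open Finset Filter Topology

lemma norm2_sq {n : ℕ} (x : Fin n → ℝ) : norm2 x ^ 2 = ∑ i, (x i)^2 :=
  Real.sq_sqrt (Finset.sum_nonneg fun i _ => sq_nonneg _)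

lemma tv_cvx {n : ℕ} (w : Fin n → Fin n → ℝ) (hnn : ∀ i j, 0 ≤ w i j)
    (f u : Fin n → ℝ) {t : ℝ} (ht0 : 0 ≤ t) (ht1 : t ≤ 1) :
    TVfun w (f + t • (u - f)) ≤ (1 - t) * TVfun w f + t * TVfun w u := by
  unfold TVfun
  have key : ∀ i j : Fin n, w i j * |(f + t • (u - f)) i - (f + t • (u - f)) j|
      ≤ (1 - t) * (w i j * |f i - f j|) + t * (w i j * |u i - u j|) := by
    intro i j
    have h1 : (f + t • (u - f)) i - (f + t • (u - f)) j
        = (1 - t) * (f i - f j) + t * (u i - u j) := by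
      simp only [Pi.add_apply, Pi.smul_apply, Pi.sub_apply, smul_eq_mul]; ring
    rw [h1]
    have habs := abs_add_le ((1 - t) * (f i - f j)) (t * (u i - u j))
    have h2 : |(1-t) * (f i - f j)| = (1-t) * |f i - f j| := by
      rw [abs_mul, abs_of_nonneg (by linarith)]
    have h3 : |t * (u i - u j)| = t * |u i - u j| := by
      rw [abs_mul, abs_of_nonneg ht0]
    rw [h2, h3] at habs
    nlinarith [hnn i j, abs_nonneg ((1-t)*(f i - f j) + t*(u i - u j))]
  have hsum : ∑ i, ∑ j, w i j * |(f + t•(u-f)) i - (f + t•(u-f)) j|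
      ≤ ∑ i, ∑ j, ((1-t) * (w i j * |f i - f j|) + t * (w i j * |u i - u j|)) :=
    Finset.sum_le_sum (fun i _ => Finset.sum_le_sum (fun j _ => key i j))
  simp only [Finset.sum_add_distrib, ← Finset.mul_sum] at hsum
  linarith

theorem stmt17 {n : ℕ} (w : Fin n → Fin n → ℝ)
    (hsym : ∀ i j, w i j = w j i) (hnn : ∀ i j, 0 ≤ w i j)
    (hconn : GraphConnected w) (c : ℝ) (hc : 0 < c)
    (fstar : Fin n → ℝ) (hfc : Nonconstant fstar)
    (hfix : ∃ v : Fin n → ℝ, IsSubgradient Bfun fstar v ∧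
      ∀ u : Fin n → ℝ,
        TVfun w fstar + Efun w fstar * norm2 (fstar - (fstar + c • v))^2 / (2*c)
          ≤ TVfun w u + Efun w fstar * norm2 (u - (fstar + c • v))^2 / (2*c)) :
    ∃ wst vst : Fin n → ℝ, IsSubgradient (TVfun w) fstar wst ∧
      IsSubgradient Bfun fstar vst ∧ wst - Efun w fstar • vst = 0 := by
  obtain ⟨v, hv, hmin⟩ := hfix
  set E := Efun w fstar with hEdef
  refine ⟨E • v, v, ?_, hv, by simp⟩
  intro u
  set K := E / (2 * c) with hKdef
  set Sd := ∑ i, (u i - fstar i)^2 with hSd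
  set D := dotV v (u - fstar) with hD
  have hdot : dotV (E • v) (u - fstar) = E * D := by
    simp only [hD, dotV, Finset.mul_sum, Pi.smul_apply, smul_eq_mul, mul_assoc]
  rw [hdot]
  have key : ∀ t : ℝ, 0 < t → t ≤ 1 →
      E * D ≤ TVfun w u - TVfun w fstar + K * t * Sd := by
    intro t ht0 ht1
    have hm := hmin (fstar + t • (u - fstar))
    have hcvx := tv_cvx w hnn fstar u ht0.le ht1
    have e1 : Efun w fstar * norm2 (fstar - (fstar + c • v))^2 / (2*c)
        = K * ∑ i, (c * v i)^2 := by
      have hsum1 : ∑ i, ((fstar - (fstar + c • v)) i)^2 = ∑ i, (c * v i)^2 := by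
        apply Finset.sum_congr rfl
        intro i _
        simp only [Pi.sub_apply, Pi.add_apply, Pi.smul_apply, smul_eq_mul]
        ring
      rw [norm2_sq, hsum1, hKdef, hEdef]
      ring
    have e2 : Efun w fstar * norm2 ((fstar + t • (u - fstar)) - (fstar + c • v))^2 / (2*c)
        = K * ∑ i, (t * (u i - fstar i) - c * v i)^2 := by
      have hsum2 : ∑ i, (((fstar + t • (u - fstar)) - (fstar + c • v)) i)^2
          = ∑ i, (t * (u i - fstar i) - c * v i)^2 := by
        apply Finset.sum_congr rfl
        intro i _
        simp only [Pi.sub_apply, Pi.add_apply, Pi.smul_apply, smul_eq_mul]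
        ring
      rw [norm2_sq, hsum2, hKdef, hEdef]
      ring
    have e3 : ∑ i, (t * (u i - fstar i) - c * v i)^2
        = t^2 * Sd - 2*t*c*D + ∑ i, (c * v i)^2 := by
      simp only [hSd, hD, dotV, Finset.mul_sum, ← Finset.sum_sub_distrib,
        ← Finset.sum_add_distrib]
      apply Finset.sum_congr rfl
      intro i _
      simp only [Pi.sub_apply]
      ring
    rw [e1, e2, e3] at hm
    -- hm : T f + K * Sv ≤ T(f + t d) + K * (t^2 Sd - 2 t c D + Sv)
    have hKE : E = K * (2 * c) := by
      rw [hKdef]; field_simp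
    have h4 : 0 ≤ t * (TVfun w u - TVfun w fstar) + K * t^2 * Sd - K * (2*t*c) * D := by
      nlinarith [hm, hcvx]
    have h5 : E * D * t ≤ (TVfun w u - TVfun w fstar + K * t * Sd) * t := by
      rw [hKE]; nlinarith [h4]
    exact le_of_mul_le_mul_right h5 ht0
  have hlim : Tendsto (fun t : ℝ => TVfun w u - TVfun w fstar + K * t * Sd)
      (𝓝[>] (0:ℝ)) (𝓝 (TVfun w u - TVfun w fstar)) := by
    have hcont : Continuous (fun t : ℝ => TVfun w u - TVfun w fstar + K * t * Sd) := by
      continuity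
    have h0 := hcont.tendsto 0
    simp only [mul_zero, zero_mul, add_zero] at h0
    exact h0.mono_left nhdsWithin_le_nhds
  have hev : ∀ᶠ t in 𝓝[>] (0:ℝ),
      E * D ≤ TVfun w u - TVfun w fstar + K * t * Sd := by
    filter_upwards [Ioo_mem_nhdsGT_of_mem (Set.mem_Ico.mpr ⟨le_refl (0:ℝ), one_pos⟩)]
      with t ht
    exact key t ht.1 ht.2.le
  have := ge_of_tendsto hlim hev
  linarith
end
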